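/- Let K ⊆ ℝ² be a convex body of constant width 1 with support function h, and let γ(θ) = h(θ) u(θ) + h'(θ) u'(θ). Then γ is 1-Lipschitz: |γ(θ₁) − γ(θ₂)| ≤ |θ₁ − θ₂| for all θ₁, θ₂ ∈ ℝ. -/

import Mathlib

open Real

/-- The direction vector `u θ = (cos θ, sin θ)` in the Euclidean plane. -/
noncomputable def u (θ : ℝ) : EuclideanSpace ℝ (Fin 2) := !₂[Real.cos θ, Real.sin θ]

/-- The rotated vector `u' θ = (−sin θ, cos θ)`, the derivative of `u`. -/
noncomputable def u' (θ : ℝ) : EuclideanSpace ℝ (Fin 2) := !₂[-Real.sin θ, Real.cos θ]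

/-- `h` is the support function of `K`: for every direction `θ`,
`h θ` is the maximum of `x · u θ` over `x ∈ K`. -/
def IsSupportFn (K : Set (EuclideanSpace ℝ (Fin 2))) (h : ℝ → ℝ) : Prop :=
  ∀ θ : ℝ, IsGreatest ((fun x => (inner ℝ x (u θ) : ℝ)) '' K) (h θ)

/-! Constant width forces every chord of `K` to have length at most `1`, and hence, for a
support point `x θ` (a maximiser of `⟪·, u θ⟫` on `K`), also `x θ - u θ ∈ K`. Comparing `x a`
with `x b - u b` and `x b` with `x a - u a` gives `‖x a - x b‖ ≤ ‖u a - u b‖ ≤ |a - b|`.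
Consequently `h` is squeezed between `⟪x θ, u ·⟫` and that function plus `(· - θ)²`, so
`h' θ = ⟪x θ, u' θ⟫` and `γ θ = x θ`. -/

lemma inner_u (x : EuclideanSpace ℝ (Fin 2)) (θ : ℝ) :
    inner ℝ x (u θ) = x 0 * cos θ + x 1 * sin θ := by
  simp [u, PiLp.inner_apply, Fin.sum_univ_two, mul_comm]

lemma inner_u' (x : EuclideanSpace ℝ (Fin 2)) (θ : ℝ) :
    inner ℝ x (u' θ) = x 0 * -sin θ + x 1 * cos θ := by
  simp [u', PiLp.inner_apply, Fin.sum_univ_two, mul_comm]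

lemma inner_u_u (a b : ℝ) : inner ℝ (u a) (u b) = cos (a - b) := by
  rw [inner_u, cos_sub]
  simp [u]

lemma norm_u (θ : ℝ) : ‖u θ‖ = 1 := by
  have h := inner_u_u θ θ
  rw [sub_self, cos_zero, real_inner_self_eq_norm_sq] at h
  exact (pow_eq_one_iff_of_nonneg (norm_nonneg _) two_ne_zero).mp h

lemma u_add_pi (θ : ℝ) : u (θ + π) = -u θ := by
  ext i
  fin_cases i <;> simp [u, cos_add_pi, sin_add_pi]

lemma norm_u_sub_u_le (a b : ℝ) : ‖u a - u b‖ ≤ |a - b| := by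
  have hsq : ‖u a - u b‖ ^ 2 ≤ |a - b| ^ 2 := by
    rw [norm_sub_sq_real, norm_u, norm_u, inner_u_u, sq_abs]
    linarith [one_sub_sq_div_two_le_cos (x := a - b)]
  exact pow_le_pow_iff_left₀ (norm_nonneg _) (abs_nonneg _) two_ne_zero |>.mp hsq

lemma inner_u_smul_u_add_inner_u'_smul_u' (x : EuclideanSpace ℝ (Fin 2)) (θ : ℝ) :
    inner ℝ x (u θ) • u θ + inner ℝ x (u' θ) • u' θ = x := by
  rw [inner_u, inner_u']
  ext i
  fin_cases i <;> simp only [u, u', Fin.zero_eta, Fin.mk_one, PiLp.add_apply, PiLp.smul_apply,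
    Matrix.cons_val_zero, Matrix.cons_val_one, Matrix.cons_val_fin_one, smul_eq_mul]
  · linear_combination x 0 * sin_sq_add_cos_sq θ
  · linear_combination x 1 * sin_sq_add_cos_sq θ

lemma exists_eq_norm_smul_u (v : EuclideanSpace ℝ (Fin 2)) : ∃ θ, v = ‖v‖ • u θ := by
  set z : ℂ := ⟨v 0, v 1⟩
  have hpolar : v = ‖z‖ • u (Complex.arg z) := by
    ext i
    fin_cases i
    · simp [u, Complex.norm_mul_cos_arg, z]
    · simp [u, Complex.norm_mul_sin_arg, z]
  refine ⟨Complex.arg z, ?_⟩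
  rw [hpolar, norm_smul, norm_u, mul_one, norm_norm]

lemma hasDerivAt_inner_u (x : EuclideanSpace ℝ (Fin 2)) (θ : ℝ) :
    HasDerivAt (fun φ => inner ℝ x (u φ)) (inner ℝ x (u' θ)) θ := by
  simp only [inner_u, inner_u']
  exact ((hasDerivAt_cos θ).const_mul (x 0)).add ((hasDerivAt_sin θ).const_mul (x 1))

namespace IsSupportFn

variable {K : Set (EuclideanSpace ℝ (Fin 2))} {h : ℝ → ℝ}

lemma inner_le (hsupp : IsSupportFn K h) {x : EuclideanSpace ℝ (Fin 2)} (hx : x ∈ K) (θ : ℝ) :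
    inner ℝ x (u θ) ≤ h θ :=
  (hsupp θ).2 ⟨x, hx, rfl⟩

lemma exists_inner_eq (hsupp : IsSupportFn K h) (θ : ℝ) : ∃ x ∈ K, inner ℝ x (u θ) = h θ :=
  (hsupp θ).1

lemma norm_sub_le_one (hsupp : IsSupportFn K h) (hwidth : ∀ θ, h θ + h (θ + π) = 1)
    {p q : EuclideanSpace ℝ (Fin 2)} (hp : p ∈ K) (hq : q ∈ K) :
    ‖p - q‖ ≤ 1 := by
  obtain ⟨θ, hθ⟩ := exists_eq_norm_smul_u (p - q)
  have hnorm : inner ℝ (p - q) (u θ) = ‖p - q‖ := by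
    nth_rw 1 [hθ]
    rw [real_inner_smul_left, real_inner_self_eq_norm_sq, norm_u, one_pow, mul_one]
  have hq' := hsupp.inner_le hq (θ + π)
  rw [u_add_pi, inner_neg_right] at hq'
  rw [inner_sub_left] at hnorm
  linarith [hsupp.inner_le hp θ, hwidth θ]

/-- A maximizer `q` in the opposite direction has `⟪p - q, u θ⟫ = 1 ≥ ‖p - q‖`, forcing
`p - q = u θ`. -/
lemma sub_u_mem (hsupp : IsSupportFn K h) (hwidth : ∀ θ, h θ + h (θ + π) = 1)
    {p : EuclideanSpace ℝ (Fin 2)} (hp : p ∈ K) {θ : ℝ}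
    (hpθ : inner ℝ p (u θ) = h θ) : p - u θ ∈ K := by
  obtain ⟨q, hq, hqθ⟩ := hsupp.exists_inner_eq (θ + π)
  rw [u_add_pi, inner_neg_right] at hqθ
  have hinner : inner ℝ (p - q) (u θ) = 1 := by
    rw [inner_sub_left]
    linarith [hwidth θ]
  have hnorm : ‖p - q‖ = 1 := by
    refine le_antisymm (hsupp.norm_sub_le_one hwidth hp hq) ?_
    simpa [hinner, norm_u] using real_inner_le_norm (p - q) (u θ)
  have hpq : p - q = u θ := (inner_eq_one_iff_of_norm_eq_one hnorm (norm_u θ)).mp hinner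
  rwa [← hpq, sub_sub_cancel]

lemma norm_sub_sq_le_two_mul_inner (hsupp : IsSupportFn K h) (hwidth : ∀ θ, h θ + h (θ + π) = 1)
    {p q : EuclideanSpace ℝ (Fin 2)} (hp : p ∈ K) (hq : q ∈ K)
    {θ : ℝ} (hpθ : inner ℝ p (u θ) = h θ) : ‖p - q‖ ^ 2 ≤ 2 * inner ℝ (p - q) (u θ) := by
  have hle := hsupp.norm_sub_le_one hwidth hq (hsupp.sub_u_mem hwidth hp hpθ)
  rw [show q - (p - u θ) = u θ - (p - q) by abel] at hle
  have hsq := norm_sub_sq_real (u θ) (p - q)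
  rw [norm_u, real_inner_comm] at hsq
  nlinarith [norm_nonneg (u θ - (p - q))]

lemma norm_sub_le_norm_u_sub_u (hsupp : IsSupportFn K h) (hwidth : ∀ θ, h θ + h (θ + π) = 1)
    {p q : EuclideanSpace ℝ (Fin 2)} (hp : p ∈ K) (hq : q ∈ K)
    {a b : ℝ} (hpa : inner ℝ p (u a) = h a) (hqb : inner ℝ q (u b) = h b) :
    ‖p - q‖ ≤ ‖u a - u b‖ := by
  have hab := hsupp.norm_sub_sq_le_two_mul_inner hwidth hp hq hpa
  have hba := hsupp.norm_sub_sq_le_two_mul_inner hwidth hq hp hqb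
  rw [norm_sub_rev, ← neg_sub p q, inner_neg_left] at hba
  have hsq : ‖p - q‖ ^ 2 ≤ ‖p - q‖ * ‖u a - u b‖ := calc
    ‖p - q‖ ^ 2 ≤ inner ℝ (p - q) (u a - u b) := by rw [inner_sub_right]; linarith
    _ ≤ ‖p - q‖ * ‖u a - u b‖ := real_inner_le_norm _ _
  nlinarith [norm_nonneg (p - q), norm_nonneg (u a - u b)]

lemma sub_inner_u_le_sq (hsupp : IsSupportFn K h) (hwidth : ∀ θ, h θ + h (θ + π) = 1)
    {p : EuclideanSpace ℝ (Fin 2)} (hp : p ∈ K) {θ : ℝ}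
    (hpθ : inner ℝ p (u θ) = h θ) (φ : ℝ) : h φ - inner ℝ p (u φ) ≤ (φ - θ) ^ 2 := by
  obtain ⟨q, hq, hqφ⟩ := hsupp.exists_inner_eq φ
  have hchord := hsupp.norm_sub_le_norm_u_sub_u hwidth hq hp hqφ hpθ
  have harc := norm_u_sub_u_le φ θ
  calc h φ - inner ℝ p (u φ)
      ≤ inner ℝ (q - p) (u φ - u θ) := by
        rw [inner_sub_left, inner_sub_right, inner_sub_right]
        linarith [hsupp.inner_le hq θ]
    _ ≤ ‖q - p‖ * ‖u φ - u θ‖ := real_inner_le_norm _ _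
    _ ≤ |φ - θ| * |φ - θ| := by gcongr; exact hchord.trans harc
    _ = (φ - θ) ^ 2 := by rw [← sq, sq_abs]

lemma hasDerivAt (hsupp : IsSupportFn K h) (hwidth : ∀ θ, h θ + h (θ + π) = 1)
    {p : EuclideanSpace ℝ (Fin 2)} (hp : p ∈ K) {θ : ℝ}
    (hpθ : inner ℝ p (u θ) = h θ) : HasDerivAt h (inner ℝ p (u' θ)) θ := by
  have hgap : (fun φ => h φ - inner ℝ p (u φ)) =O[nhds θ] fun φ => ‖φ - θ‖ ^ 2 := by
    refine Asymptotics.IsBigO.of_bound 1 (Filter.Eventually.of_forall fun φ => ?_)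
    have hnonneg : 0 ≤ h φ - inner ℝ p (u φ) := sub_nonneg.mpr (hsupp.inner_le hp φ)
    simpa [abs_of_nonneg hnonneg] using hsupp.sub_inner_u_le_sq hwidth hp hpθ φ
  have := (hgap.hasFDerivAt one_lt_two).hasDerivAt.add (hasDerivAt_inner_u p θ)
  simpa only [zero_apply, zero_add, Pi.add_def, sub_add_cancel] using this

end IsSupportFn

theorem constant_width_parametrization_lipschitz_general
    (K : Set (EuclideanSpace ℝ (Fin 2))) (h : ℝ → ℝ)
    (hsupp : IsSupportFn K h)
    (hwidth : ∀ θ : ℝ, h θ + h (θ + π) = 1) :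
    ∀ θ₁ θ₂ : ℝ, ‖(h θ₁ • u θ₁ + deriv h θ₁ • u' θ₁) - (h θ₂ • u θ₂ + deriv h θ₂ • u' θ₂)‖
      ≤ |θ₁ - θ₂| := by
  choose x hxK hxθ using hsupp.exists_inner_eq
  have hγ : ∀ θ, h θ • u θ + deriv h θ • u' θ = x θ := fun θ => by
    rw [(hsupp.hasDerivAt hwidth (hxK θ) (hxθ θ)).deriv, ← hxθ θ,
      inner_u_smul_u_add_inner_u'_smul_u']
  intro θ₁ θ₂
  rw [hγ θ₁, hγ θ₂]
  exact (hsupp.norm_sub_le_norm_u_sub_u hwidth (hxK θ₁) (hxK θ₂) (hxθ θ₁) (hxθ θ₂)).trans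
    (norm_u_sub_u_le θ₁ θ₂)

/-- For a convex body `K` of constant width 1 with support function `h`, the boundary
parametrization `γ(θ) = h(θ) u(θ) + h'(θ) u'(θ)` is 1-Lipschitz:
`‖γ(θ₁) − γ(θ₂)‖ ≤ |θ₁ − θ₂|`. -/
theorem constant_width_parametrization_lipschitz
    (K : Set (EuclideanSpace ℝ (Fin 2))) (h : ℝ → ℝ)
    (hne : K.Nonempty) (hcomp : IsCompact K) (hconv : Convex ℝ K)
    (hsupp : IsSupportFn K h)
    (hwidth : ∀ θ : ℝ, h θ + h (θ + π) = 1) :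
    ∀ θ₁ θ₂ : ℝ, ‖(h θ₁ • u θ₁ + deriv h θ₁ • u' θ₁) - (h θ₂ • u θ₂ + deriv h θ₂ • u' θ₂)‖
      ≤ |θ₁ - θ₂| :=
  constant_width_parametrization_lipschitz_general K h hsupp hwidth
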